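/- Let q ≥ 1. For i = 1,…,s let g_i : ℝ^q → ℝ be a C^∞ function of the form g_i = k_i·(h_i ∘ Φ_i), where k_i : ℝ^q → ℝ is C^∞ and nowhere vanishing, Φ_i : ℝ^q → ℝ^q is a C^∞ diffeomorphism (a bijection with C^∞ inverse), and h_i : ℝ^q → ℝ is a C^∞ function which is quasihomogeneous of some degree δ_i ∈ ℕ for some non-negative integer weights w^{(i)} = (w^{(i)}_1,…,w^{(i)}_q) with Σ_j w^{(i)}_j ≥ 1 (i.e. h_i(s^{w^{(i)}_1}x₁,…,s^{w^{(i)}_q}x_q) = s^{δ_i}·h_i(x) for all s ∈ (0,1], x ∈ ℝ^q). Then for all C^∞ functions f₁,…,f_s : ℝ^q → ℝ there exist C^∞ vector fields Y^{(1)},…,Y^{(s)} : ℝ^q → ℝ^q such that Σ_{i=1}^s g_i·f_i = Σ_{i=1}^s div(g_i·Y^{(i)}) on ℝ^q, where div Z = Σ_{j=1}^q ∂Z_j/∂x_j. -/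

import Mathlib

/-!
A weakly quasihomogeneous `h` (weights `w`, degree `δ`) satisfies Euler's identity `E h = δ h` for
the weighted Euler field `E x = (wⱼ xⱼ)ⱼ`, and the radial integral
`F x = ∫₀¹ t^(c-1) f(t^w x) dt`, `c = δ + ∑ w ≥ 1`, solves `E F + c F = f`
(differentiate `s^c F(s^w x) = ∫₀ˢ u^(c-1) f(u^w x) du` at `s = 1`). Since `div E = ∑ w`, this
gives `div (h F E) = h f`. Solvability of `div (h Y) = h f` survives multiplying `h` by a
nowhere-vanishing `k` (divide `Y` by `k`) and composing `h` with a diffeomorphism `Φ`: the Piola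
transform `Y ↦ adj (DΦ) · Y ∘ Φ` multiplies divergences by `det DΦ`, because the columns of
`adj (DΦ)` are divergence free. Summing the solutions for the `gᵢ` gives the theorem.
-/

open Finset intervalIntegral Topology
open scoped ContDiff Matrix

noncomputable section

theorem ContinuousLinearMap.apply_eq_sum_mul_single {ι : Type*} [Fintype ι] [DecidableEq ι]
    (L : (ι → ℝ) →L[ℝ] ℝ) (u : ι → ℝ) : L u = ∑ j, u j * L (Pi.single j 1) := by
  have hu : u = ∑ j, u j • (Pi.single j 1 : ι → ℝ) := by
    ext l; simp [Pi.single_apply, Finset.sum_apply]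
  conv_lhs => rw [hu]
  simp [map_sum, smul_eq_mul]

theorem sum_sum_mul_eq_zero_of_symm_of_antisymm {ι : Type*} [Fintype ι] {S T : ι → ι → ℝ}
    (hS : ∀ j l, S j l = S l j) (hT : ∀ j l, T j l = -T l j) :
    ∑ j, ∑ l, S j l * T j l = 0 := by
  have h : ∑ j, ∑ l, S j l * T j l = -∑ j, ∑ l, S j l * T j l := by
    conv_rhs => rw [Finset.sum_comm]
    rw [← sum_neg_distrib]
    refine sum_congr rfl fun j _ => ?_
    rw [← sum_neg_distrib]
    refine sum_congr rfl fun l _ => ?_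
    rw [hS j l, hT j l, mul_neg]
  linarith

section Parametric

universe u

-- A single universe: the induction below replaces `F` by `H →L[ℝ] F`.
variable {H F : Type u} [NormedAddCommGroup H] [NormedSpace ℝ H] [ProperSpace H]
  [NormedAddCommGroup F] [NormedSpace ℝ F]

theorem hasFDerivAt_intervalIntegral_of_contDiff {G : H → ℝ → F} (hG : ContDiff ℝ 1 ↿G)
    (a b : ℝ) (x₀ : H) :
    HasFDerivAt (fun x => ∫ t in a..b, G x t)
      (∫ t in a..b, (fderiv ℝ ↿G (x₀, t)).comp (ContinuousLinearMap.inl ℝ H ℝ)) x₀ := by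
  set G' : H → ℝ → H →L[ℝ] F := fun x t => (fderiv ℝ ↿G (x, t)).comp (.inl ℝ H ℝ)
  have hG' : Continuous fun p : H × ℝ => G' p.1 p.2 :=
    (hG.continuous_fderiv one_ne_zero).clm_comp continuous_const
  have hdiff (t : ℝ) (x : H) : HasFDerivAt (fun x => G x t) (G' x t) x :=
    (hG.differentiable one_ne_zero (x, t)).hasFDerivAt.comp (g := ↿G) x
      (hasFDerivAt_prodMk_left (𝕜 := ℝ) x t)
  obtain ⟨C, hC⟩ := ((isCompact_closedBall x₀ 1).prod isCompact_uIcc).exists_bound_of_continuousOn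
    hG'.continuousOn
  refine hasFDerivAt_integral_of_dominated_of_fderiv_le (F' := G') (bound := fun _ => C)
    (Metric.ball_mem_nhds x₀ one_pos) ?_ ?_ ?_ ?_ intervalIntegrable_const ?_
  · exact .of_forall fun x => (hG.continuous.comp (Continuous.prodMk_right x)).aestronglyMeasurable
  · exact (hG.continuous.comp (Continuous.prodMk_right x₀)).intervalIntegrable a b
  · exact (hG'.comp (Continuous.prodMk_right x₀)).aestronglyMeasurable
  · filter_upwards with t ht x hx
    exact hC (x, t) ⟨Metric.ball_subset_closedBall hx, Set.Ioc_subset_Icc_self ht⟩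
  · filter_upwards with t _ x _ using hdiff t x

theorem contDiff_intervalIntegral_of_contDiff {G : H → ℝ → F} (hG : ContDiff ℝ ∞ ↿G)
    (a b : ℝ) : ContDiff ℝ ∞ fun x => ∫ t in a..b, G x t := by
  refine contDiff_infty.2 fun n => ?_
  induction n generalizing F with
  | zero =>
    exact contDiff_zero.2 (continuous_parametric_intervalIntegral_of_continuous' hG.continuous a b)
  | succ n ih =>
    have hD := hasFDerivAt_intervalIntegral_of_contDiff (hG.of_le (by simp)) a b
    refine contDiff_succ_iff_fderiv.2
      ⟨fun x => (hD x).differentiableAt, fun h => absurd h (WithTop.natCast_ne_top n), ?_⟩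
    rw [funext fun x => (hD x).fderiv]
    exact ih (G := fun x t => (fderiv ℝ ↿G (x, t)).comp (.inl ℝ H ℝ))
      ((hG.fderiv_right (m := ∞) le_rfl).clm_comp contDiff_const)

end Parametric

def detRowContinuousMultilinear (ι : Type*) [Fintype ι] [DecidableEq ι] :
    ContinuousMultilinearMap ℝ (fun _ : ι => ι → ℝ) ℝ where
  toMultilinearMap := (Matrix.detRowAlternating : (ι → ℝ) [⋀^ι]→ₗ[ℝ] ℝ).toMultilinearMap
  cont := continuous_id.matrix_det

section Determinant

variable {ι : Type*} [Fintype ι] [DecidableEq ι]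
  {E : Type*} [NormedAddCommGroup E] [NormedSpace ℝ E]

theorem fderiv_matrix_det_apply {M : E → Matrix ι ι ℝ} {x : E}
    (hM : ∀ r l, DifferentiableAt ℝ (M · r l) x) (v : E) :
    fderiv ℝ (fun y => (M y).det) x v =
      ∑ r, ((M x).updateRow r fun l => fderiv ℝ (M · r l) x v).det := by
  have hrow (r : ι) : HasFDerivAt (M · r) (.pi fun l => fderiv ℝ (M · r l) x) x :=
    hasFDerivAt_pi.2 fun l => (hM r l).hasFDerivAt
  have hD := HasFDerivAt.multilinear_comp (detRowContinuousMultilinear ι) hrow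
  change fderiv ℝ (fun y => detRowContinuousMultilinear ι fun r => M y r) x v = _
  rw [hD.fderiv]
  simp only [_root_.sum_apply, ContinuousLinearMap.comp_apply,
    ContinuousMultilinearMap.toContinuousLinearMap_apply]
  rfl

theorem ContDiff.matrix_det {M : E → Matrix ι ι ℝ} {n : WithTop ℕ∞}
    (hM : ∀ r l, ContDiff ℝ n (M · r l)) : ContDiff ℝ n fun y => (M y).det :=
  (detRowContinuousMultilinear ι).contDiff.comp (contDiff_pi.2 fun r => contDiff_pi.2 (hM r))

theorem ContDiff.matrix_adjugate {M : E → Matrix ι ι ℝ} {n : WithTop ℕ∞}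
    (hM : ∀ r l, ContDiff ℝ n (M · r l)) (i j : ι) :
    ContDiff ℝ n fun y => (M y).adjugate i j := by
  simp only [Matrix.adjugate_apply]
  refine ContDiff.matrix_det fun r l => ?_
  simp only [Matrix.updateRow_apply]
  split_ifs
  exacts [contDiff_const, hM r l]

theorem det_updateRow_eq_sum (A : Matrix ι ι ℝ) (r : ι) (c : ι → ℝ) :
    (A.updateRow r c).det = ∑ l, c l * (A.updateRow r (Pi.single l 1)).det :=
  ((detRowContinuousMultilinear ι).toContinuousLinearMap A r).apply_eq_sum_mul_single c

theorem det_updateRow_updateRow_swap {R : Type*} [CommRing R] (A : Matrix ι ι R) {m r : ι}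
    (h : m ≠ r) (a b : ι → R) :
    ((A.updateRow m a).updateRow r b).det = -((A.updateRow m b).updateRow r a).det := by
  have hswap : (A.updateRow m b).updateRow r a =
      ((A.updateRow m a).updateRow r b).submatrix (Equiv.swap m r) id := by
    ext i l
    simp only [Matrix.submatrix_apply, Matrix.updateRow_apply, Equiv.swap_apply_def, id]
    split_ifs <;> simp_all
  rw [hswap, Matrix.det_permute, Equiv.Perm.sign_swap h]
  simp

end Determinant

variable {q : ℕ}

def divergence (W : (Fin q → ℝ) → Fin q → ℝ) (x : Fin q → ℝ) : ℝ :=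
  ∑ j, fderiv ℝ (fun y => W y j) x (Pi.single j 1)

theorem divergence_smul {φ : (Fin q → ℝ) → ℝ} {W : (Fin q → ℝ) → Fin q → ℝ} {x : Fin q → ℝ}
    (hφ : DifferentiableAt ℝ φ x) (hW : DifferentiableAt ℝ W x) :
    divergence (fun y => φ y • W y) x = fderiv ℝ φ x (W x) + φ x * divergence W x := by
  simp only [divergence, Pi.smul_apply, smul_eq_mul,
    fderiv_fun_mul hφ (differentiableAt_pi.1 hW _), add_apply, smul_apply, smul_eq_mul,
    sum_add_distrib, ← mul_sum, (fderiv ℝ φ x).apply_eq_sum_mul_single (W x)]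
  ring

def weightedScale (w : Fin q → ℕ) (t : ℝ) (x : Fin q → ℝ) : Fin q → ℝ := fun j => t ^ w j * x j

def eulerField (w : Fin q → ℕ) (x : Fin q → ℝ) : Fin q → ℝ := fun j => (w j : ℝ) * x j

theorem weightedScale_weightedScale (w : Fin q → ℕ) (s t : ℝ) (x : Fin q → ℝ) :
    weightedScale w t (weightedScale w s x) = weightedScale w (s * t) x := by
  ext j; simp only [weightedScale, mul_pow]; ring

@[simp]
theorem weightedScale_one (w : Fin q → ℕ) (x : Fin q → ℝ) : weightedScale w 1 x = x := by
  ext j; simp [weightedScale]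

theorem continuous_weightedScale (w : Fin q → ℕ) (x : Fin q → ℝ) :
    Continuous fun t => weightedScale w t x :=
  continuous_pi fun j => (continuous_pow (w j)).mul continuous_const

theorem hasDerivAt_weightedScale_one (w : Fin q → ℕ) (x : Fin q → ℝ) :
    HasDerivAt (fun t => weightedScale w t x) (eulerField w x) 1 :=
  hasDerivAt_pi.2 fun j => by
    simpa [weightedScale, eulerField] using (hasDerivAt_pow (w j) (1 : ℝ)).mul_const (x j)

theorem hasDerivAt_comp_weightedScale_one {u : (Fin q → ℝ) → ℝ} {x : Fin q → ℝ}
    (hu : DifferentiableAt ℝ u x) (w : Fin q → ℕ) :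
    HasDerivAt (fun t => u (weightedScale w t x)) (fderiv ℝ u x (eulerField w x)) 1 := by
  have hu' : HasFDerivAt u (fderiv ℝ u x) (weightedScale w 1 x) := by
    rw [weightedScale_one]; exact hu.hasFDerivAt
  exact hu'.comp_hasDerivAt (1 : ℝ) (hasDerivAt_weightedScale_one w x)

theorem divergence_eulerField (w : Fin q → ℕ) (x : Fin q → ℝ) :
    divergence (eulerField w) x = ∑ j, (w j : ℝ) := by
  refine sum_congr rfl fun j _ => ?_
  have hlin : (fun y : Fin q → ℝ => eulerField w y j) =
      ⇑((w j : ℝ) • ContinuousLinearMap.proj (R := ℝ) (φ := fun _ : Fin q => ℝ) j) := by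
    ext y; simp [eulerField]
  rw [hlin, ContinuousLinearMap.fderiv]
  simp

theorem contDiff_eulerField (w : Fin q → ℕ) : ContDiff ℝ ∞ (eulerField w) :=
  contDiff_pi.2 fun j => contDiff_const.mul (contDiff_apply ℝ ℝ j)

def IsQuasihomogeneous (w : Fin q → ℕ) (δ : ℕ) (h : (Fin q → ℝ) → ℝ) : Prop :=
  ∀ t ∈ Set.Ioc (0 : ℝ) 1, ∀ x, h (weightedScale w t x) = t ^ δ * h x

/-- Euler's identity. The scaling law is only available for `t ≤ 1`, so both sides are
differentiated at `t = 1` within `Iic 1`. -/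
theorem IsQuasihomogeneous.fderiv_eulerField {w : Fin q → ℕ} {δ : ℕ} {h : (Fin q → ℝ) → ℝ}
    (hqh : IsQuasihomogeneous w δ h) {x : Fin q → ℝ} (hx : DifferentiableAt ℝ h x) :
    fderiv ℝ h x (eulerField w x) = δ * h x := by
  have hlhs := (hasDerivAt_comp_weightedScale_one hx w).hasDerivWithinAt (s := Set.Iic 1)
  have hrhs : HasDerivWithinAt (fun t : ℝ => t ^ δ * h x) (δ * h x) (Set.Iic 1) 1 := by
    simpa using ((hasDerivAt_pow δ (1 : ℝ)).mul_const (h x)).hasDerivWithinAt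
  have heq : (fun t => h (weightedScale w t x)) =ᶠ[𝓝[Set.Iic 1] 1] fun t => t ^ δ * h x := by
    filter_upwards [Ioc_mem_nhdsLE (zero_lt_one' ℝ)] with t ht using hqh t ht x
  exact (uniqueDiffWithinAt_Iic 1).eq_deriv _ hlhs (hrhs.congr_of_eventuallyEq heq (by simp))

def radialIntegral (w : Fin q → ℕ) (n : ℕ) (v : (Fin q → ℝ) → ℝ) (x : Fin q → ℝ) : ℝ :=
  ∫ t in (0 : ℝ)..1, t ^ n * v (weightedScale w t x)

theorem pow_mul_radialIntegral_weightedScale (w : Fin q → ℕ) (n : ℕ) (v : (Fin q → ℝ) → ℝ)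
    (x : Fin q → ℝ) (s : ℝ) :
    s ^ (n + 1) * radialIntegral w n v (weightedScale w s x) =
      ∫ u in (0 : ℝ)..s, u ^ n * v (weightedScale w u x) := by
  have hsub := smul_integral_comp_mul_left (a := 0) (b := 1)
    (fun u => u ^ n * v (weightedScale w u x)) s
  simp only [mul_zero, mul_one, smul_eq_mul] at hsub
  rw [← hsub, radialIntegral, ← integral_const_mul, ← integral_const_mul]
  congr 1 with t
  rw [weightedScale_weightedScale, mul_pow]
  ring

theorem fderiv_radialIntegral_eulerField {w : Fin q → ℕ} {n : ℕ} {v : (Fin q → ℝ) → ℝ}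
    (hv : Continuous v) {x : Fin q → ℝ} (hF : DifferentiableAt ℝ (radialIntegral w n v) x) :
    fderiv ℝ (radialIntegral w n v) x (eulerField w x) =
      v x - (n + 1) * radialIntegral w n v x := by
  have hlhs : HasDerivAt (fun s : ℝ => s ^ (n + 1) * radialIntegral w n v (weightedScale w s x))
      _ 1 := (hasDerivAt_pow (n + 1) (1 : ℝ)).mul (hasDerivAt_comp_weightedScale_one hF w)
  simp only [pow_mul_radialIntegral_weightedScale] at hlhs
  have hrhs := ((continuous_pow n).mul
    (hv.comp (continuous_weightedScale w x))).integral_hasStrictDerivAt 0 1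
  have hderiv := hlhs.unique hrhs.hasDerivAt
  simp only [Nat.cast_add, Nat.cast_one, one_pow, mul_one, weightedScale_one, one_mul,
    Pi.mul_apply, Function.comp_apply] at hderiv
  linarith

/-- Vanishing of the top cohomology of forms with coefficients in the ideal `⟨g⟩`: top forms are
identified with functions and `(q-1)`-forms with vector fields through the volume form. -/
def PoincareProperty (g : (Fin q → ℝ) → ℝ) : Prop :=
  ∀ f : (Fin q → ℝ) → ℝ, ContDiff ℝ ∞ f →
    ∃ Y : (Fin q → ℝ) → Fin q → ℝ, ContDiff ℝ ∞ Y ∧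
      ∀ x, divergence (fun y => g y • Y y) x = g x * f x

theorem IsQuasihomogeneous.poincareProperty {w : Fin q → ℕ} {δ : ℕ} {h : (Fin q → ℝ) → ℝ}
    (hqh : IsQuasihomogeneous w δ h) (hh : Differentiable ℝ h) (hw : 1 ≤ δ + ∑ j, w j) :
    PoincareProperty h := by
  intro f hf
  set F := radialIntegral w (δ + ∑ j, w j - 1) f
  have hF : ContDiff ℝ ∞ F := by
    refine contDiff_intervalIntegral_of_contDiff ?_ 0 1
    exact (contDiff_snd.pow _).mul (hf.comp (contDiff_pi.2 fun j =>
      (contDiff_snd.pow _).mul ((contDiff_apply ℝ ℝ j).comp contDiff_fst)))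
  refine ⟨fun y => F y • eulerField w y, hF.smul (contDiff_eulerField w), fun x => ?_⟩
  have hFd : DifferentiableAt ℝ F x := hF.differentiable (by simp) x
  have hcast : ((δ + ∑ j, w j - 1 : ℕ) : ℝ) + 1 = δ + ∑ j, (w j : ℝ) := by
    rw [← Nat.cast_sum, ← Nat.cast_add, ← Nat.cast_add_one, Nat.sub_add_cancel hw]
  have hFE : fderiv ℝ F x (eulerField w x) = f x - ((δ + ∑ j, w j - 1 : ℕ) + 1) * F x :=
    fderiv_radialIntegral_eulerField hf.continuous hFd
  simp only [smul_smul]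
  rw [divergence_smul (φ := fun y => h y * F y) ((hh x).mul hFd)
    ((contDiff_eulerField w).differentiable (by simp) x), fderiv_fun_mul (hh x) hFd,
    divergence_eulerField]
  simp only [add_apply, smul_apply, smul_eq_mul, hqh.fderiv_eulerField (hh x), hFE, hcast]
  ring

def jacobian (Φ : (Fin q → ℝ) → Fin q → ℝ) (x : Fin q → ℝ) : Matrix (Fin q) (Fin q) ℝ :=
  LinearMap.toMatrix' (fderiv ℝ Φ x : (Fin q → ℝ) →ₗ[ℝ] Fin q → ℝ)

theorem jacobian_apply (Φ : (Fin q → ℝ) → Fin q → ℝ) (x : Fin q → ℝ) (r l : Fin q) :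
    jacobian Φ x r l = fderiv ℝ Φ x (Pi.single l 1) r := rfl

theorem contDiff_jacobian_apply {Φ : (Fin q → ℝ) → Fin q → ℝ} {n : WithTop ℕ∞}
    (hΦ : ContDiff ℝ (n + 1) Φ) (r l : Fin q) : ContDiff ℝ n fun x => jacobian Φ x r l :=
  contDiff_pi.1 ((hΦ.fderiv_right le_rfl).clm_apply contDiff_const) r

theorem det_jacobian_ne_zero {Φ Ψ : (Fin q → ℝ) → Fin q → ℝ} (hΦ : Differentiable ℝ Φ)
    (hΨ : Differentiable ℝ Ψ) (hleft : Function.LeftInverse Ψ Φ) (x : Fin q → ℝ) :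
    (jacobian Φ x).det ≠ 0 := by
  have hcomp : (fderiv ℝ Ψ (Φ x)).comp (fderiv ℝ Φ x) = .id ℝ (Fin q → ℝ) := by
    rw [← fderiv_comp x (hΨ _) (hΦ x), show Ψ ∘ Φ = id from funext hleft, fderiv_id]
  have hdet := congrArg (fun L : (Fin q → ℝ) →L[ℝ] Fin q → ℝ => LinearMap.det L.toLinearMap) hcomp
  rw [ContinuousLinearMap.toLinearMap_comp, LinearMap.det_comp, ContinuousLinearMap.coe_id,
    LinearMap.det_id] at hdet
  rw [jacobian, LinearMap.det_toMatrix']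
  exact right_ne_zero_of_mul_eq_one hdet

theorem fderiv_jacobian_apply_comm {Φ : (Fin q → ℝ) → Fin q → ℝ} (hΦ : ContDiff ℝ 2 Φ)
    (x : Fin q → ℝ) (r j l : Fin q) :
    fderiv ℝ (fun y => jacobian Φ y r l) x (Pi.single j 1) =
      fderiv ℝ (fun y => jacobian Φ y r j) x (Pi.single l 1) := by
  have hΦr : ContDiff ℝ 2 (fun y => Φ y r) := contDiff_pi.1 hΦ r
  have hJ (l : Fin q) :
      (fun y => jacobian Φ y r l) = fun y => fderiv ℝ (fun z => Φ z r) y (Pi.single l 1) := by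
    ext y
    rw [jacobian_apply, fderiv_apply (hΦ.differentiable two_ne_zero y)]
    rfl
  have hd : DifferentiableAt ℝ (fderiv ℝ fun z => Φ z r) x :=
    (hΦr.fderiv_right (m := 1) le_rfl).differentiable one_ne_zero x
  rw [hJ, hJ, fderiv_clm_apply hd (differentiableAt_const _),
    fderiv_clm_apply hd (differentiableAt_const _)]
  simpa using (hΦr.contDiffAt.isSymmSndFDerivAt (by simp)) (Pi.single j 1) (Pi.single l 1)

/-- Piola identity. Differentiating the cofactors row by row pairs the symmetric second
derivatives of `Φ` with determinants that are antisymmetric in the same two indices. -/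
theorem divergence_adjugate_jacobian {Φ : (Fin q → ℝ) → Fin q → ℝ} (hΦ : ContDiff ℝ 2 Φ)
    (m : Fin q) (x : Fin q → ℝ) :
    divergence (fun y j => (jacobian Φ y).adjugate j m) x = 0 := by
  have hJ (r l : Fin q) : DifferentiableAt ℝ (fun y => jacobian Φ y r l) x :=
    (contDiff_jacobian_apply (n := 1) hΦ r l).differentiable one_ne_zero x
  set H : Fin q → Fin q → Fin q → ℝ :=
    fun r j l => fderiv ℝ (fun y => jacobian Φ y r l) x (Pi.single j 1)
  set T : Fin q → Fin q → Fin q → ℝ := fun r j l =>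
    (((jacobian Φ x).updateRow m (Pi.single j 1)).updateRow r (Pi.single l 1)).det
  have hterm (j : Fin q) : fderiv ℝ (fun y => (jacobian Φ y).adjugate j m) x (Pi.single j 1) =
      ∑ r, if r = m then 0 else ∑ l, H r j l * T r j l := by
    simp only [Matrix.adjugate_apply]
    rw [fderiv_matrix_det_apply fun r l => by
      simp only [Matrix.updateRow_apply]; split_ifs; exacts [differentiableAt_const _, hJ r l]]
    refine sum_congr rfl fun r _ => ?_
    split_ifs with hr
    · subst hr
      exact Matrix.det_eq_zero_of_row_eq_zero r fun l => by simp
    · simp only [Matrix.updateRow_ne hr]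
      exact det_updateRow_eq_sum _ r _
  simp only [divergence, hterm]
  rw [sum_comm]
  refine sum_eq_zero fun r _ => ?_
  split_ifs with hr
  · simp
  · exact sum_sum_mul_eq_zero_of_symm_of_antisymm (fderiv_jacobian_apply_comm hΦ x r)
      fun j l => det_updateRow_updateRow_swap _ (Ne.symm hr) _ _

theorem fderiv_apply_eq_jacobian_mulVec (Φ : (Fin q → ℝ) → Fin q → ℝ) (x v : Fin q → ℝ) :
    fderiv ℝ Φ x v = jacobian Φ x *ᵥ v :=
  (LinearMap.toMatrix'_mulVec _ v).symm

/-- Piola transform: by the Piola identity only the terms with `DΦ · adj DΦ = det DΦ` survive. -/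
theorem divergence_adjugate_jacobian_mulVec_comp {Φ : (Fin q → ℝ) → Fin q → ℝ}
    (hΦ : ContDiff ℝ 2 Φ) {W : (Fin q → ℝ) → Fin q → ℝ} {x : Fin q → ℝ}
    (hW : DifferentiableAt ℝ W (Φ x)) :
    divergence (fun y => (jacobian Φ y).adjugate *ᵥ W (Φ y)) x =
      (jacobian Φ x).det * divergence W (Φ x) := by
  have hA (j m : Fin q) : DifferentiableAt ℝ (fun y => (jacobian Φ y).adjugate j m) x :=
    (ContDiff.matrix_adjugate (contDiff_jacobian_apply (n := 1) hΦ) j m).differentiable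
      one_ne_zero x
  have hWΦ (m : Fin q) : HasFDerivAt (fun y => W (Φ y) m)
      ((fderiv ℝ (fun z => W z m) (Φ x)).comp (fderiv ℝ Φ x)) x :=
    (differentiableAt_pi.1 hW m).hasFDerivAt.comp x
      (hΦ.differentiable two_ne_zero x).hasFDerivAt
  have hcol (m : Fin q) :
      fderiv ℝ Φ x (fun j => (jacobian Φ x).adjugate j m) =
        (jacobian Φ x).det • Pi.single m 1 := by
    ext l
    simp only [fderiv_apply_eq_jacobian_mulVec, Matrix.mulVec, dotProduct, ← Matrix.mul_apply,
      Matrix.mul_adjugate, Matrix.smul_apply, Matrix.one_apply, Pi.smul_apply, Pi.single_apply]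
  have hchain (m : Fin q) :
      ∑ j, (jacobian Φ x).adjugate j m * fderiv ℝ (fun y => W (Φ y) m) x (Pi.single j 1) =
        (jacobian Φ x).det * fderiv ℝ (fun z => W z m) (Φ x) (Pi.single m 1) := by
    rw [(hWΦ m).fderiv, ← ContinuousLinearMap.apply_eq_sum_mul_single,
      ContinuousLinearMap.comp_apply, hcol, map_smul, smul_eq_mul]
  have hpiola (m : Fin q) :
      ∑ j, fderiv ℝ (fun y => (jacobian Φ y).adjugate j m) x (Pi.single j 1) = 0 :=
    divergence_adjugate_jacobian hΦ m x
  have hrow (j : Fin q) :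
      fderiv ℝ (fun y => ∑ m, (jacobian Φ y).adjugate j m * W (Φ y) m) x (Pi.single j 1) =
        ∑ m, ((jacobian Φ x).adjugate j m * fderiv ℝ (fun y => W (Φ y) m) x (Pi.single j 1) +
          W (Φ x) m * fderiv ℝ (fun y => (jacobian Φ y).adjugate j m) x (Pi.single j 1)) := by
    rw [fderiv_fun_sum (A := fun m y => (jacobian Φ y).adjugate j m * W (Φ y) m)
      fun m _ => (hA j m).mul (hWΦ m).differentiableAt, _root_.sum_apply]
    simp only [fderiv_fun_mul (hA j _) (hWΦ _).differentiableAt, add_apply, smul_apply,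
      smul_eq_mul]
  change ∑ j, fderiv ℝ (fun y => ∑ m, (jacobian Φ y).adjugate j m * W (Φ y) m) x
    (Pi.single j 1) = _
  simp only [hrow, sum_add_distrib]
  rw [sum_comm, sum_congr rfl fun m _ => hchain m, sum_comm]
  simp only [← mul_sum, hpiola, mul_zero, sum_const_zero, add_zero]
  rfl

theorem PoincareProperty.mul_left {g k : (Fin q → ℝ) → ℝ} (hg : PoincareProperty g)
    (hk : ContDiff ℝ ∞ k) (hk0 : ∀ x, k x ≠ 0) : PoincareProperty fun x => k x * g x := by
  intro f hf
  obtain ⟨Y, hY, hdiv⟩ := hg (fun x => k x * f x) (hk.mul hf)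
  refine ⟨fun y => (k y)⁻¹ • Y y, (hk.inv hk0).smul hY, fun x => ?_⟩
  have hcancel : (fun y => (k y * g y) • (k y)⁻¹ • Y y) = fun y => g y • Y y := by
    ext y j
    simp only [Pi.smul_apply, smul_eq_mul]
    field_simp [hk0 y]
  rw [hcancel, hdiv x]
  ring

/-- Solve for `(f / det DΦ) ∘ Ψ` and pull the solution back by the Piola transform. -/
theorem PoincareProperty.comp_of_leftInverse {h : (Fin q → ℝ) → ℝ} (hh : PoincareProperty h)
    (hhd : Differentiable ℝ h) {Φ Ψ : (Fin q → ℝ) → Fin q → ℝ} (hΦ : ContDiff ℝ ∞ Φ)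
    (hΨ : ContDiff ℝ ∞ Ψ) (hleft : Function.LeftInverse Ψ Φ) :
    PoincareProperty fun x => h (Φ x) := by
  intro f hf
  have hJ : ∀ r l, ContDiff ℝ ∞ fun x => jacobian Φ x r l :=
    contDiff_jacobian_apply (hΦ.of_le (by norm_cast))
  have hd0 := det_jacobian_ne_zero (hΦ.differentiable (by simp)) (hΨ.differentiable (by simp)) hleft
  obtain ⟨V, hV, hdiv⟩ := hh (fun z => f (Ψ z) / (jacobian Φ (Ψ z)).det)
    ((hf.comp hΨ).div ((ContDiff.matrix_det hJ).comp hΨ) fun z => hd0 _)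
  have hY : ContDiff ℝ ∞ fun y => (jacobian Φ y).adjugate *ᵥ V (Φ y) :=
    contDiff_pi.2 fun j => by
      change ContDiff ℝ ∞ fun y => ∑ m, (jacobian Φ y).adjugate j m * V (Φ y) m
      exact ContDiff.sum fun m _ =>
        (ContDiff.matrix_adjugate hJ j m).mul (contDiff_pi.1 (hV.comp hΦ) m)
  refine ⟨_, hY, fun x => ?_⟩
  have hpull : (fun y => h (Φ y) • ((jacobian Φ y).adjugate *ᵥ V (Φ y))) =
      fun y => (jacobian Φ y).adjugate *ᵥ (fun z => h z • V z) (Φ y) := by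
    ext y
    rw [Matrix.mulVec_smul]
  rw [hpull, divergence_adjugate_jacobian_mulVec_comp (W := fun z => h z • V z)
    (hΦ.of_le (by norm_cast)) ((hhd _).smul (hV.differentiable (by simp) _)), hdiv, hleft x]
  field_simp [hd0 x]

end

open Finset in
theorem sum_wqh_divergence_general
    (q s : ℕ)
    (g k h : Fin s → ((Fin q → ℝ) → ℝ))
    (Φ Ψ : Fin s → ((Fin q → ℝ) → (Fin q → ℝ)))
    (w : Fin s → Fin q → ℕ) (δ : Fin s → ℕ)
    (hk : ∀ i, ContDiff ℝ (⊤ : ℕ∞) (k i)) (hk0 : ∀ i x, k i x ≠ 0)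
    (hΦ : ∀ i, ContDiff ℝ (⊤ : ℕ∞) (Φ i)) (hΨ : ∀ i, ContDiff ℝ (⊤ : ℕ∞) (Ψ i))
    (hleft : ∀ i, Function.LeftInverse (Ψ i) (Φ i))
    (hh : ∀ i, ContDiff ℝ (⊤ : ℕ∞) (h i))
    (hw : ∀ i, 1 ≤ ∑ j, w i j)
    (hqh : ∀ i, ∀ t ∈ Set.Ioc (0:ℝ) 1, ∀ x : Fin q → ℝ,
      h i (fun j => t ^ (w i j) * x j) = t ^ (δ i) * h i x)
    (hg : ∀ i x, g i x = k i x * h i (Φ i x))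
    (f : Fin s → ((Fin q → ℝ) → ℝ)) (hf : ∀ i, ContDiff ℝ (⊤ : ℕ∞) (f i)) :
    ∃ Y : Fin s → (Fin q → ℝ) → (Fin q → ℝ),
      (∀ i, ContDiff ℝ (⊤ : ℕ∞) (Y i)) ∧
      ∀ x : Fin q → ℝ,
        ∑ i, g i x * f i x =
          ∑ i, ∑ j, fderiv ℝ (fun y => g i y * Y i y j) x (Pi.single j 1) := by
  have hP (i : Fin s) : PoincareProperty (g i) := by
    rw [show g i = fun x => k i x * h i (Φ i x) from funext (hg i)]
    have hqh' : IsQuasihomogeneous (w i) (δ i) (h i) := hqh i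
    have hhd : Differentiable ℝ (h i) := (hh i).differentiable (by simp)
    exact ((hqh'.poincareProperty hhd (le_add_left (hw i))).comp_of_leftInverse hhd (hΦ i)
      (hΨ i) (hleft i)).mul_left (hk i) (hk0 i)
  choose Y hY hdiv using fun i => hP i (f i) (hf i)
  exact ⟨Y, hY, fun x => sum_congr rfl fun i _ => (hdiv i x).symm⟩

open Finset in
/-- Proposition 4.4 (Poincare) in divergence form: if each `gᵢ` is a unit multiple of a
weakly quasihomogeneous function composed with a diffeomorphism, then every combination
`∑ gᵢ·fᵢ` with smooth `fᵢ` is a sum of divergences `∑ div(gᵢ·Y⁽ⁱ⁾)` for smooth vector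
fields `Y⁽ⁱ⁾`. -/
theorem sum_wqh_divergence
    (q s : ℕ) (hq : 1 ≤ q)
    (g k h : Fin s → ((Fin q → ℝ) → ℝ))
    (Φ Ψ : Fin s → ((Fin q → ℝ) → (Fin q → ℝ)))
    (w : Fin s → Fin q → ℕ) (δ : Fin s → ℕ)
    (hk : ∀ i, ContDiff ℝ (⊤ : ℕ∞) (k i)) (hk0 : ∀ i x, k i x ≠ 0)
    (hΦ : ∀ i, ContDiff ℝ (⊤ : ℕ∞) (Φ i)) (hΨ : ∀ i, ContDiff ℝ (⊤ : ℕ∞) (Ψ i))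
    (hleft : ∀ i, Function.LeftInverse (Ψ i) (Φ i))
    (hright : ∀ i, Function.RightInverse (Ψ i) (Φ i))
    (hh : ∀ i, ContDiff ℝ (⊤ : ℕ∞) (h i))
    (hw : ∀ i, 1 ≤ ∑ j, w i j)
    (hqh : ∀ i, ∀ t ∈ Set.Ioc (0:ℝ) 1, ∀ x : Fin q → ℝ,
      h i (fun j => t ^ (w i j) * x j) = t ^ (δ i) * h i x)
    (hg : ∀ i x, g i x = k i x * h i (Φ i x))
    (f : Fin s → ((Fin q → ℝ) → ℝ)) (hf : ∀ i, ContDiff ℝ (⊤ : ℕ∞) (f i)) :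
    ∃ Y : Fin s → (Fin q → ℝ) → (Fin q → ℝ),
      (∀ i, ContDiff ℝ (⊤ : ℕ∞) (Y i)) ∧
      ∀ x : Fin q → ℝ,
        ∑ i, g i x * f i x =
          ∑ i, ∑ j, fderiv ℝ (fun y => g i y * Y i y j) x (Pi.single j 1) :=
  sum_wqh_divergence_general q s g k h Φ Ψ w δ hk hk0 hΦ hΨ hleft hh hw hqh hg f hf
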